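/- Let X be a random variable on 𝒳 and let Z = (Z_j)_{j∈𝒥} ∼ Q₁(·|X) be generated by the Coordinate block privacy mechanism. Then for every j ∈ 𝒥, the conditional expectation satisfies E[Z_j | X] = φ_j(X) almost surely. -/

import Mathlib

open MeasureTheory ProbabilityTheory Real
open scoped BigOperators ENNReal

noncomputable section

/-- `Γ_k = 2^{k-1} / C(k-1, ⌊(k-1)/2⌋)`. -/
noncomputable def Gam (k : ℕ) : ℝ := 2 ^ (k - 1) / (Nat.choose (k - 1) ((k - 1) / 2) : ℝ)

/-- `B_k(a) = B₀ Γ_k (e^a+1)/(e^a-1)`. -/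
noncomputable def Bk (B₀ : ℝ) (k : ℕ) (a : ℝ) : ℝ :=
  B₀ * ((Real.exp a + 1) / (Real.exp a - 1)) * Gam k

/-- `ξ_A = A (e^A+1)/(e^A-1)`. -/
noncomputable def xiA (A : ℝ) : ℝ := A * (Real.exp A + 1) / (Real.exp A - 1)

section Mechanism

variable {𝒳 : Type*} [MeasurableSpace 𝒳]
variable {𝒥 𝓛 : Type*} [Fintype 𝒥] [DecidableEq 𝒥] [Fintype 𝓛] [DecidableEq 𝓛]

/-- The block of indices with label `ℓ`. -/
def BlkT (blk : 𝒥 → 𝓛) (ℓ : 𝓛) : Type _ := {j : 𝒥 // blk j = ℓ}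

instance (blk : 𝒥 → 𝓛) (ℓ : 𝓛) : Fintype (BlkT blk ℓ) :=
  Subtype.fintype _

instance (blk : 𝒥 → 𝓛) (ℓ : 𝓛) : DecidableEq (BlkT blk ℓ) :=
  Subtype.instDecidableEq

/-- `d_ℓ`, the cardinality of block `ℓ`. -/
noncomputable def dl (blk : 𝒥 → 𝓛) (ℓ : 𝓛) : ℕ := Fintype.card (BlkT blk ℓ)

/-- sign vector to real vector with magnitude `c`. -/
def signVal (c : ℝ) (b : Bool) : ℝ := if b then c else -c

variable (blk : 𝒥 → 𝓛) (αl : 𝓛 → ℝ) (B₀ : ℝ)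

/-- Magnitude of the output coordinates in block `ℓ`. -/
noncomputable def Bval (ℓ : 𝓛) : ℝ := Bk B₀ (dl blk ℓ) (αl ℓ)

/-- Inner product `⟨z, ṽ⟩` over block `ℓ`, where `σ` (resp. `τ`) is the sign
vector of `z ∈ {±B_{d_ℓ}(α_ℓ)}^{d_ℓ}` (resp. of `ṽ ∈ {±B₀}^{d_ℓ}`). -/
noncomputable def ipZ (ℓ : 𝓛) (σ τ : BlkT blk ℓ → Bool) : ℝ :=
  ∑ j : BlkT blk ℓ, signVal (Bval blk αl B₀ ℓ) (σ j) * signVal B₀ (τ j)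

open scoped Classical in
/-- `|{z : ⟨z,ṽ⟩ > 0}|`. -/
noncomputable def DplusCard (ℓ : 𝓛) (τ : BlkT blk ℓ → Bool) : ℕ :=
  (Finset.univ.filter fun σ : BlkT blk ℓ → Bool => 0 < ipZ blk αl B₀ ℓ σ τ).card

open scoped Classical in
/-- `|{z : ⟨z,ṽ⟩ < 0}|`. -/
noncomputable def DminusCard (ℓ : 𝓛) (τ : BlkT blk ℓ → Bool) : ℕ :=
  (Finset.univ.filter fun σ : BlkT blk ℓ → Bool => ipZ blk αl B₀ ℓ σ τ < 0).card

open scoped Classical in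
/-- `|{z : ⟨z,ṽ⟩ = 0}|`. -/
noncomputable def DzeroCard (ℓ : 𝓛) (τ : BlkT blk ℓ → Bool) : ℕ :=
  (Finset.univ.filter fun σ : BlkT blk ℓ → Bool => ipZ blk αl B₀ ℓ σ τ = 0).card

/-- `p_ℓ`: probability that `Y_ℓ = 1`. -/
noncomputable def pl (ℓ : 𝓛) : ℝ :=
  if dl blk ℓ % 2 = 1 then 1
  else 1 - (Nat.choose (dl blk ℓ) (dl blk ℓ / 2) : ℝ) / 2 ^ dl blk ℓ

/-- `π_{α_ℓ} = e^{α_ℓ}/(1+e^{α_ℓ})`. -/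
noncomputable def pil (ℓ : 𝓛) : ℝ := Real.exp (αl ℓ) / (1 + Real.exp (αl ℓ))

/-- Conditional probability `P(Z_{[ℓ]} = z | Ṽ_{[ℓ]} = ṽ)` (as a function of the
sign vectors `σ` of `z` and `τ` of `ṽ`): with probability `p_ℓ`, draw
`T_ℓ ∼ B(π_{α_ℓ})` and pick `z` uniformly on `{⟨z,ṽ⟩ > 0}` if `T_ℓ = 1`,
uniformly on `{⟨z,ṽ⟩ < 0}` if `T_ℓ = 0`; with probability `1 - p_ℓ` pick `z`
uniformly on `{⟨z,ṽ⟩ = 0}`. -/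
noncomputable def condP (ℓ : 𝓛) (τ σ : BlkT blk ℓ → Bool) : ℝ :=
  pl blk ℓ * (pil αl ℓ *
      (if 0 < ipZ blk αl B₀ ℓ σ τ then ((DplusCard blk αl B₀ ℓ τ : ℝ))⁻¹ else 0)
    + (1 - pil αl ℓ) *
      (if ipZ blk αl B₀ ℓ σ τ < 0 then ((DminusCard blk αl B₀ ℓ τ : ℝ))⁻¹ else 0))
  + (1 - pl blk ℓ) *
      (if ipZ blk αl B₀ ℓ σ τ = 0 then ((DzeroCard blk αl B₀ ℓ τ : ℝ))⁻¹ else 0)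

variable (φ : 𝒥 → 𝒳 → ℝ)

/-- `P(Ṽ_{[ℓ]} = ṽ | X = x)`: independent coordinates, `Ṽ_j = B₀` with
probability `1/2 + φ_j(x)/(2B₀)` and `-B₀` otherwise. -/
noncomputable def vP (x : 𝒳) (ℓ : 𝓛) (τ : BlkT blk ℓ → Bool) : ℝ :=
  ∏ j : BlkT blk ℓ,
    (if τ j then 1/2 + φ j.1 x / (2 * B₀) else 1/2 - φ j.1 x / (2 * B₀))

/-- `P(Z_{[ℓ]} = z | X = x)` for the block `ℓ`. -/
noncomputable def blockP (x : 𝒳) (ℓ : 𝓛) (σ : BlkT blk ℓ → Bool) : ℝ :=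
  ∑ τ : BlkT blk ℓ → Bool, vP blk B₀ φ x ℓ τ * condP blk αl B₀ ℓ τ σ

/-- Probability of the full output sign vector `σ` given `X = x` (blocks are
drawn independently). -/
noncomputable def mechP (x : 𝒳) (σ : 𝒥 → Bool) : ℝ :=
  ∏ ℓ : 𝓛, blockP blk αl B₀ φ x ℓ (fun j => σ j.1)

/-- Output vector associated with a sign vector. -/
noncomputable def zOf (σ : 𝒥 → Bool) : 𝒥 → ℝ :=
  fun j => signVal (Bval blk αl B₀ (blk j)) (σ j)

/-- The Coordinate block privacy mechanism `Q₁`: the conditional distribution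
of the private view `Z = (Z_j)_{j ∈ 𝒥} ∈ ∏_ℓ {±B_{d_ℓ}(α_ℓ)}^{d_ℓ}` given `X = x`. -/
noncomputable def mechQ (x : 𝒳) : Measure (𝒥 → ℝ) :=
  ∑ σ : 𝒥 → Bool, ENNReal.ofReal (mechP blk αl B₀ φ x σ) • Measure.dirac (zOf blk αl B₀ σ)

end Mechanism

end

section CombAux
open Finset

lemma sum_pm {γ : Type*} {P : Finset γ} {c : γ → Prop} [DecidablePred c] :
    (∑ s ∈ P, (if c s then (1:ℝ) else -1))
      = ((P.filter c).card : ℝ) - ((P.filter fun s => ¬ c s).card : ℝ) := by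
  rw [← Finset.sum_filter_add_sum_filter_not P c]
  rw [Finset.sum_congr rfl (fun s hs => if_pos (mem_filter.1 hs).2),
    Finset.sum_congr rfl (fun s hs => if_neg (mem_filter.1 hs).2)]
  simp [sub_eq_add_neg]

variable {F : Type*} [Fintype F] [DecidableEq F]

lemma count_avoid (j₀ : F) (k : ℕ) :
    ((univ : Finset (Finset F)).filter fun s => j₀ ∉ s ∧ s.card = k).card
      = (Fintype.card F - 1).choose k := by
  have : ((univ : Finset (Finset F)).filter fun s => j₀ ∉ s ∧ s.card = k)
      = Finset.powersetCard k (univ.erase j₀) := by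
    ext s
    simp only [mem_filter, mem_univ, true_and, mem_powersetCard, subset_erase, subset_univ,
      true_and]
  rw [this, card_powersetCard, card_erase_of_mem (mem_univ _), card_univ]

lemma count_mem (j₀ : F) (P : ℕ → Prop) [DecidablePred P] :
    ((univ : Finset (Finset F)).filter fun s => j₀ ∈ s ∧ P s.card).card
      = ((univ : Finset (Finset F)).filter fun t => j₀ ∉ t ∧ P (t.card + 1)).card := by
  apply Finset.card_nbij' (fun s => s.erase j₀) (fun t => insert j₀ t)
  · intro s hs
    simp only [mem_coe, mem_filter, mem_univ, true_and] at hs ⊢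
    refine ⟨notMem_erase _ _, ?_⟩
    rw [card_erase_of_mem hs.1, Nat.sub_add_cancel (card_pos.2 ⟨j₀, hs.1⟩)]
    exact hs.2
  · intro t ht
    simp only [mem_coe, mem_filter, mem_univ, true_and] at ht ⊢
    refine ⟨mem_insert_self _ _, ?_⟩
    rw [card_insert_of_notMem ht.1]; exact ht.2
  · intro s hs
    simp only [mem_coe, mem_filter, mem_univ, true_and] at hs
    exact insert_erase hs.1
  · intro t ht
    simp only [mem_coe, mem_filter, mem_univ, true_and] at ht
    exact erase_insert ht.1

lemma card_plus_eq_minus :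
    ((univ : Finset (Finset F)).filter fun s => Fintype.card F < 2 * s.card).card
      = ((univ : Finset (Finset F)).filter fun s => 2 * s.card < Fintype.card F).card := by
  apply Finset.card_nbij (fun s => sᶜ)
  · intro s hs
    simp only [mem_coe, mem_filter, mem_univ, true_and, card_compl] at hs ⊢
    have := s.card_le_univ
    omega
  · intro s hs t ht hst
    simpa using congrArg compl hst
  · intro t ht
    simp only [Set.mem_image, mem_coe, mem_filter, mem_univ, true_and, card_compl] at ht ⊢
    refine ⟨tᶜ, ?_, compl_compl t⟩
    have := t.card_le_univ
    rw [card_compl]; omega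

lemma card_zero_eq :
    ((univ : Finset (Finset F)).filter fun s => 2 * s.card = Fintype.card F).card
      = if Fintype.card F % 2 = 0 then (Fintype.card F).choose (Fintype.card F / 2) else 0 := by
  split_ifs with h
  · have : ((univ : Finset (Finset F)).filter fun s => 2 * s.card = Fintype.card F)
        = Finset.powersetCard (Fintype.card F / 2) (univ : Finset F) := by
      ext s
      simp only [mem_filter, mem_univ, true_and, mem_powersetCard, subset_univ, true_and]
      omega
    rw [this, card_powersetCard, card_univ]
  · rw [Finset.card_eq_zero, Finset.filter_eq_empty_iff]
    intro s _; omega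

lemma card_partition :
    2 * ((univ : Finset (Finset F)).filter fun s => Fintype.card F < 2 * s.card).card
      + ((univ : Finset (Finset F)).filter fun s => 2 * s.card = Fintype.card F).card
      = 2 ^ Fintype.card F := by
  have h1 := Finset.card_filter_add_card_filter_not (s := (univ : Finset (Finset F)))
    (p := fun s => Fintype.card F < 2 * s.card)
  have h2 := Finset.card_filter_add_card_filter_not
    (s := (univ : Finset (Finset F)).filter fun s => ¬ Fintype.card F < 2 * s.card)
    (p := fun s => 2 * s.card = Fintype.card F)
  rw [Finset.filter_filter, Finset.filter_filter] at h2
  have e1 : ((univ : Finset (Finset F)).filter fun s =>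
      ¬ Fintype.card F < 2 * s.card ∧ 2 * s.card = Fintype.card F)
      = (univ : Finset (Finset F)).filter fun s => 2 * s.card = Fintype.card F := by
    apply Finset.filter_congr; intro s _; constructor <;> intro h <;> first | exact h.2 | omega
  have e2 : ((univ : Finset (Finset F)).filter fun s =>
      ¬ Fintype.card F < 2 * s.card ∧ ¬ 2 * s.card = Fintype.card F)
      = (univ : Finset (Finset F)).filter fun s => 2 * s.card < Fintype.card F := by
    apply Finset.filter_congr; intro s _; constructor <;> intro h <;> omega
  rw [e1, e2] at h2
  have hcard : (univ : Finset (Finset F)).card = 2 ^ Fintype.card F := by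
    rw [card_univ, Fintype.card_finset]
  have h3 := card_plus_eq_minus (F := F)
  omega

lemma choose_half {d : ℕ} (hd : 1 ≤ d) : (d-1).choose (d/2) = (d-1).choose ((d-1)/2) := by
  rcases Nat.mod_two_eq_zero_or_one d with h | h
  · rw [show (d-1)/2 = (d-1) - (d/2) by omega, Nat.choose_symm (by omega)]
  · rw [show d/2 = (d-1)/2 by omega]

lemma wsum_plus (j₀ : F) (hd : 1 ≤ Fintype.card F) :
    ∑ s ∈ (univ : Finset (Finset F)).filter (fun s => Fintype.card F < 2 * s.card),
      (if j₀ ∈ s then (1:ℝ) else -1)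
    = ((Fintype.card F - 1).choose ((Fintype.card F - 1)/2) : ℝ) := by
  set d := Fintype.card F with hdd
  rw [sum_pm]
  have eA : ((univ : Finset (Finset F)).filter (fun s => d < 2 * s.card)).filter
      (fun s => j₀ ∈ s) = (univ : Finset (Finset F)).filter
      (fun s => j₀ ∈ s ∧ d < 2 * s.card) := by
    rw [Finset.filter_filter]; apply Finset.filter_congr; intro s _; exact and_comm
  have eB : ((univ : Finset (Finset F)).filter (fun s => d < 2 * s.card)).filter
      (fun s => ¬ j₀ ∈ s) = (univ : Finset (Finset F)).filter
      (fun s => j₀ ∉ s ∧ d < 2 * s.card) := by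
    rw [Finset.filter_filter]; apply Finset.filter_congr; intro s _; exact and_comm
  rw [eA, eB, count_mem j₀ (fun n => d < 2 * n)]
  have h2 := Finset.card_filter_add_card_filter_not
    (s := (univ : Finset (Finset F)).filter (fun t => j₀ ∉ t ∧ d < 2 * (t.card + 1)))
    (p := fun t => d < 2 * t.card)
  rw [Finset.filter_filter, Finset.filter_filter] at h2
  have e1 : ((univ : Finset (Finset F)).filter
      (fun t => (j₀ ∉ t ∧ d < 2 * (t.card + 1)) ∧ d < 2 * t.card))
      = (univ : Finset (Finset F)).filter (fun t => j₀ ∉ t ∧ d < 2 * t.card) := by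
    apply Finset.filter_congr; intro t _
    constructor
    · rintro ⟨⟨h1, _⟩, h3⟩; exact ⟨h1, h3⟩
    · rintro ⟨h1, h3⟩; exact ⟨⟨h1, by omega⟩, h3⟩
  have e2 : ((univ : Finset (Finset F)).filter
      (fun t => (j₀ ∉ t ∧ d < 2 * (t.card + 1)) ∧ ¬ d < 2 * t.card))
      = (univ : Finset (Finset F)).filter (fun t => j₀ ∉ t ∧ t.card = d / 2) := by
    apply Finset.filter_congr; intro t _
    constructor
    · rintro ⟨⟨h1, h2'⟩, h3⟩; exact ⟨h1, by omega⟩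
    · rintro ⟨h1, h3⟩; exact ⟨⟨h1, by omega⟩, by omega⟩
  rw [e1, e2, count_avoid j₀ (d/2), ← hdd] at h2
  rw [← choose_half hd, ← h2]
  push_cast
  ring

lemma wsum_minus (j₀ : F) :
    ∑ s ∈ (univ : Finset (Finset F)).filter (fun s => 2 * s.card < Fintype.card F),
      (if j₀ ∈ s then (1:ℝ) else -1)
    = - ∑ s ∈ (univ : Finset (Finset F)).filter (fun s => Fintype.card F < 2 * s.card),
      (if j₀ ∈ s then (1:ℝ) else -1) := by
  rw [← Finset.sum_neg_distrib]
  apply Finset.sum_nbij' (fun s => sᶜ) (fun s => sᶜ)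
  · intro s hs
    simp only [mem_filter, mem_univ, true_and, card_compl] at hs ⊢
    have := s.card_le_univ
    omega
  · intro t ht
    simp only [mem_filter, mem_univ, true_and, card_compl] at ht ⊢
    have := t.card_le_univ
    omega
  · intro s _; exact compl_compl s
  · intro t _; exact compl_compl t
  · intro s _
    by_cases h : j₀ ∈ s
    · rw [if_pos h, if_neg (by simp [h]), neg_neg]
    · rw [if_neg h, if_pos (by simp [h])]

lemma wsum_zero (j₀ : F) (hd : 1 ≤ Fintype.card F) :
    ∑ s ∈ (univ : Finset (Finset F)).filter (fun s => 2 * s.card = Fintype.card F),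
      (if j₀ ∈ s then (1:ℝ) else -1) = 0 := by
  set d := Fintype.card F with hdd
  rcases Nat.mod_two_eq_zero_or_one d with h | h
  · rw [sum_pm]
    have eA : ((univ : Finset (Finset F)).filter (fun s => 2 * s.card = d)).filter
        (fun s => j₀ ∈ s) = (univ : Finset (Finset F)).filter
        (fun s => j₀ ∈ s ∧ 2 * s.card = d) := by
      rw [Finset.filter_filter]; apply Finset.filter_congr; intro s _; exact and_comm
    have eB : ((univ : Finset (Finset F)).filter (fun s => 2 * s.card = d)).filter
        (fun s => ¬ j₀ ∈ s) = (univ : Finset (Finset F)).filter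
        (fun s => j₀ ∉ s ∧ s.card = d / 2) := by
      rw [Finset.filter_filter]; apply Finset.filter_congr; intro s _
      constructor
      · rintro ⟨h1, h2⟩; exact ⟨h2, by omega⟩
      · rintro ⟨h1, h2⟩; exact ⟨by omega, h1⟩
    have eC : ((univ : Finset (Finset F)).filter (fun t => j₀ ∉ t ∧ 2 * (t.card + 1) = d))
        = (univ : Finset (Finset F)).filter (fun t => j₀ ∉ t ∧ t.card = d / 2 - 1) := by
      apply Finset.filter_congr; intro t _
      constructor
      · rintro ⟨h1, h2⟩; exact ⟨h1, by omega⟩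
      · rintro ⟨h1, h2⟩; refine ⟨h1, by omega⟩
    rw [eA, eB, count_mem j₀ (fun n => 2 * n = d), eC, count_avoid, count_avoid, ← hdd]
    rw [show d / 2 - 1 = (d - 1) - d / 2 by omega, Nat.choose_symm (by omega)]
    ring
  · have : ((univ : Finset (Finset F)).filter (fun s => 2 * s.card = d)) = ∅ := by
      rw [Finset.filter_eq_empty_iff]; intro s _; omega
    rw [this, Finset.sum_empty]

/-- agreement-set equivalence -/
def eqvA (τ : F → Bool) : (F → Bool) ≃ Finset F where
  toFun σ := univ.filter fun j => σ j = τ j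
  invFun s := fun j => if j ∈ s then τ j else !(τ j)
  left_inv σ := by
    funext j
    cases hσ : σ j <;> cases hτ : τ j <;> simp [hσ, hτ]
  right_inv s := by
    ext j
    by_cases h : j ∈ s <;> simp [h]

lemma eqvA_card (τ σ : F → Bool) :
    (eqvA τ σ).card = (univ.filter fun j => σ j = τ j).card := rfl

lemma eqvA_mem (τ σ : F → Bool) (j₀ : F) : σ j₀ = τ j₀ ↔ j₀ ∈ eqvA τ σ := by
  simp [eqvA]

lemma ip_eq (Bv B₀ : ℝ) (σ τ : F → Bool) :
    (∑ j, signVal Bv (σ j) * signVal B₀ (τ j))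
      = Bv * B₀ * (2 * ((eqvA τ σ).card : ℝ) - (Fintype.card F : ℝ)) := by
  have h : ∀ j, signVal Bv (σ j) * signVal B₀ (τ j)
      = Bv * B₀ * (if σ j = τ j then (1:ℝ) else -1) := by
    intro j
    cases h1 : σ j <;> cases h2 : τ j <;> simp [signVal, h1, h2]
  rw [Finset.sum_congr rfl fun j _ => h j, ← Finset.mul_sum]
  congr 1
  rw [sum_pm (P := univ) (c := fun j => σ j = τ j)]
  have h2 : ((univ.filter fun j => ¬ σ j = τ j).card : ℝ)
      = (Fintype.card F : ℝ) - ((univ.filter fun j => σ j = τ j).card : ℝ) := by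
    have := Finset.card_filter_add_card_filter_not
      (s := (univ : Finset F)) (p := fun j => σ j = τ j)
    rw [card_univ] at this
    rw [eq_sub_iff_add_eq, ← Nat.cast_add]
    norm_cast
    omega
  rw [eqvA_card, h2]
  ring

end CombAux
section BlockAux
open Finset
open scoped Classical

variable {𝒥 𝓛 : Type*} [Fintype 𝒥] [DecidableEq 𝒥] [Fintype 𝓛] [DecidableEq 𝓛]
variable (blk : 𝒥 → 𝓛) (αl : 𝓛 → ℝ) (B₀ : ℝ) (ℓ : 𝓛)

lemma one_lt_exp' (hα : 0 < αl ℓ) : 1 < Real.exp (αl ℓ) := by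
  rw [← Real.exp_zero]; exact Real.exp_lt_exp.mpr hα

lemma Mchoose_pos (d : ℕ) : 0 < ((d-1).choose ((d-1)/2)) :=
  Nat.choose_pos (Nat.div_le_self _ _)

lemma Bval_pos (hα : 0 < αl ℓ) (hB₀ : 0 < B₀) : 0 < Bval blk αl B₀ ℓ := by
  have h1 : (0:ℝ) < Real.exp (αl ℓ) - 1 := by
    have := one_lt_exp' αl ℓ hα; linarith
  have h2 : (0:ℝ) < ((dl blk ℓ - 1).choose ((dl blk ℓ - 1)/2) : ℝ) := by
    exact_mod_cast Mchoose_pos (dl blk ℓ)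
  have h3 : (0:ℝ) < Real.exp (αl ℓ) + 1 := by positivity
  unfold Bval Bk Gam
  exact mul_pos (mul_pos hB₀ (div_pos h3 h1)) (div_pos (by positivity) h2)

lemma ipZ_eq' (σ τ : BlkT blk ℓ → Bool) :
    ipZ blk αl B₀ ℓ σ τ
      = (Bval blk αl B₀ ℓ) * B₀ * (2 * ((eqvA τ σ).card : ℝ) - (dl blk ℓ : ℝ)) :=
  ip_eq _ _ σ τ

lemma ipZ_pos_iff (hα : 0 < αl ℓ) (hB₀ : 0 < B₀) (σ τ : BlkT blk ℓ → Bool) :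
    0 < ipZ blk αl B₀ ℓ σ τ ↔ dl blk ℓ < 2 * (eqvA τ σ).card := by
  have hc : 0 < Bval blk αl B₀ ℓ * B₀ := mul_pos (Bval_pos blk αl B₀ ℓ hα hB₀) hB₀
  have hiff : ∀ y : ℝ, 0 < Bval blk αl B₀ ℓ * B₀ * y ↔ 0 < y := by
    intro y; constructor <;> intro h <;> nlinarith
  rw [ipZ_eq', hiff, sub_pos]
  constructor <;> intro h <;> exact_mod_cast h

lemma ipZ_neg_iff (hα : 0 < αl ℓ) (hB₀ : 0 < B₀) (σ τ : BlkT blk ℓ → Bool) :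
    ipZ blk αl B₀ ℓ σ τ < 0 ↔ 2 * (eqvA τ σ).card < dl blk ℓ := by
  have hc : 0 < Bval blk αl B₀ ℓ * B₀ := mul_pos (Bval_pos blk αl B₀ ℓ hα hB₀) hB₀
  have hiff : ∀ y : ℝ, Bval blk αl B₀ ℓ * B₀ * y < 0 ↔ y < 0 := by
    intro y; constructor <;> intro h <;> nlinarith
  rw [ipZ_eq', hiff, sub_neg]
  constructor <;> intro h <;> exact_mod_cast h

lemma ipZ_zero_iff (hα : 0 < αl ℓ) (hB₀ : 0 < B₀) (σ τ : BlkT blk ℓ → Bool) :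
    ipZ blk αl B₀ ℓ σ τ = 0 ↔ 2 * (eqvA τ σ).card = dl blk ℓ := by
  have hc : 0 < Bval blk αl B₀ ℓ * B₀ := mul_pos (Bval_pos blk αl B₀ ℓ hα hB₀) hB₀
  rw [ipZ_eq', mul_eq_zero]
  rw [or_iff_right (ne_of_gt hc), sub_eq_zero]
  constructor <;> intro h <;> exact_mod_cast h

lemma Dplus_eq (hα : 0 < αl ℓ) (hB₀ : 0 < B₀) (τ : BlkT blk ℓ → Bool) :
    DplusCard blk αl B₀ ℓ τ
      = ((univ : Finset (Finset (BlkT blk ℓ))).filter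
          fun s => dl blk ℓ < 2 * s.card).card := by
  unfold DplusCard
  apply Finset.card_nbij' (eqvA τ) (eqvA τ).symm
  · intro σ hσ
    simp only [mem_coe, mem_filter, mem_univ, true_and] at hσ ⊢
    exact (ipZ_pos_iff blk αl B₀ ℓ hα hB₀ σ τ).mp hσ
  · intro s hs
    simp only [mem_coe, mem_filter, mem_univ, true_and] at hs ⊢
    rw [ipZ_pos_iff blk αl B₀ ℓ hα hB₀, (eqvA τ).apply_symm_apply]
    exact hs
  · intro σ _; exact (eqvA τ).symm_apply_apply σ
  · intro s _; exact (eqvA τ).apply_symm_apply s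

lemma Dminus_eq (hα : 0 < αl ℓ) (hB₀ : 0 < B₀) (τ : BlkT blk ℓ → Bool) :
    DminusCard blk αl B₀ ℓ τ
      = ((univ : Finset (Finset (BlkT blk ℓ))).filter
          fun s => 2 * s.card < dl blk ℓ).card := by
  unfold DminusCard
  apply Finset.card_nbij' (eqvA τ) (eqvA τ).symm
  · intro σ hσ
    simp only [mem_coe, mem_filter, mem_univ, true_and] at hσ ⊢
    exact (ipZ_neg_iff blk αl B₀ ℓ hα hB₀ σ τ).mp hσ
  · intro s hs
    simp only [mem_coe, mem_filter, mem_univ, true_and] at hs ⊢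
    rw [ipZ_neg_iff blk αl B₀ ℓ hα hB₀, (eqvA τ).apply_symm_apply]
    exact hs
  · intro σ _; exact (eqvA τ).symm_apply_apply σ
  · intro s _; exact (eqvA τ).apply_symm_apply s

lemma Dzero_eq (hα : 0 < αl ℓ) (hB₀ : 0 < B₀) (τ : BlkT blk ℓ → Bool) :
    DzeroCard blk αl B₀ ℓ τ
      = ((univ : Finset (Finset (BlkT blk ℓ))).filter
          fun s => 2 * s.card = dl blk ℓ).card := by
  unfold DzeroCard
  apply Finset.card_nbij' (eqvA τ) (eqvA τ).symm
  · intro σ hσ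
    simp only [mem_coe, mem_filter, mem_univ, true_and] at hσ ⊢
    exact (ipZ_zero_iff blk αl B₀ ℓ hα hB₀ σ τ).mp hσ
  · intro s hs
    simp only [mem_coe, mem_filter, mem_univ, true_and] at hs ⊢
    rw [ipZ_zero_iff blk αl B₀ ℓ hα hB₀, (eqvA τ).apply_symm_apply]
    exact hs
  · intro σ _; exact (eqvA τ).symm_apply_apply σ
  · intro s _; exact (eqvA τ).apply_symm_apply s

lemma Dminus_eq_Dplus (hα : 0 < αl ℓ) (hB₀ : 0 < B₀) (τ : BlkT blk ℓ → Bool) :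
    DminusCard blk αl B₀ ℓ τ = DplusCard blk αl B₀ ℓ τ := by
  rw [Dplus_eq blk αl B₀ ℓ hα hB₀ τ, Dminus_eq blk αl B₀ ℓ hα hB₀ τ]
  exact (card_plus_eq_minus).symm

lemma Dplus_partition (hα : 0 < αl ℓ) (hB₀ : 0 < B₀) (τ : BlkT blk ℓ → Bool) :
    2 * DplusCard blk αl B₀ ℓ τ + DzeroCard blk αl B₀ ℓ τ = 2 ^ dl blk ℓ := by
  rw [Dplus_eq blk αl B₀ ℓ hα hB₀ τ, Dzero_eq blk αl B₀ ℓ hα hB₀ τ]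
  exact card_partition

lemma Dzero_val (hα : 0 < αl ℓ) (hB₀ : 0 < B₀) (τ : BlkT blk ℓ → Bool) :
    DzeroCard blk αl B₀ ℓ τ
      = if dl blk ℓ % 2 = 0 then (dl blk ℓ).choose (dl blk ℓ / 2) else 0 := by
  rw [Dzero_eq blk αl B₀ ℓ hα hB₀ τ]
  exact card_zero_eq

lemma Dplus_pos (hα : 0 < αl ℓ) (hB₀ : 0 < B₀) (hd : 1 ≤ dl blk ℓ)
    (τ : BlkT blk ℓ → Bool) : 1 ≤ DplusCard blk αl B₀ ℓ τ := by
  rw [Dplus_eq blk αl B₀ ℓ hα hB₀ τ]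
  refine Finset.card_pos.2 ⟨(univ : Finset (BlkT blk ℓ)), ?_⟩
  simp only [mem_filter, mem_univ, true_and, card_univ]
  have : Fintype.card (BlkT blk ℓ) = dl blk ℓ := rfl
  omega

-- (DplusCard : ℝ) = pl * 2^(d-1)
lemma Dplus_pl (hα : 0 < αl ℓ) (hB₀ : 0 < B₀) (hd : 1 ≤ dl blk ℓ)
    (τ : BlkT blk ℓ → Bool) :
    (DplusCard blk αl B₀ ℓ τ : ℝ) = pl blk ℓ * 2 ^ (dl blk ℓ - 1) := by
  have hpart := Dplus_partition blk αl B₀ ℓ hα hB₀ τ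
  have hzv := Dzero_val blk αl B₀ ℓ hα hB₀ τ
  have hpow : (2:ℝ) ^ dl blk ℓ = 2 * 2 ^ (dl blk ℓ - 1) := by
    rw [← pow_succ']
    congr 1
    omega
  unfold pl
  rcases Nat.mod_two_eq_zero_or_one (dl blk ℓ) with h | h
  · rw [if_neg (by omega)]
    rw [hzv, if_pos h] at hpart
    have : 2 * (DplusCard blk αl B₀ ℓ τ : ℝ)
        + ((dl blk ℓ).choose (dl blk ℓ / 2) : ℝ) = 2 ^ dl blk ℓ := by
      exact_mod_cast hpart
    have h2d : (0:ℝ) < 2 ^ dl blk ℓ := by positivity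
    field_simp
    nlinarith [this, hpow]
  · rw [if_pos h]
    rw [hzv, if_neg (by omega)] at hpart
    have : 2 * (DplusCard blk αl B₀ ℓ τ : ℝ) = 2 ^ dl blk ℓ := by
      exact_mod_cast hpart
    rw [hpow] at this
    linarith

end BlockAux
section SumAux
open Finset
open scoped Classical

variable {𝒥 𝓛 : Type*} [Fintype 𝒥] [DecidableEq 𝒥] [Fintype 𝓛] [DecidableEq 𝓛]
variable (blk : 𝒥 → 𝓛) (αl : 𝓛 → ℝ) (B₀ : ℝ) (ℓ : 𝓛)

lemma signVal_factor (Bv : ℝ) (τ σ : BlkT blk ℓ → Bool) (j₀ : BlkT blk ℓ) :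
    signVal Bv (σ j₀) = Bv * (if τ j₀ then (1:ℝ) else -1) *
      (if j₀ ∈ eqvA τ σ then (1:ℝ) else -1) := by
  have hif : (if j₀ ∈ eqvA τ σ then (1:ℝ) else -1) = (if σ j₀ = τ j₀ then (1:ℝ) else -1) := by
    by_cases hm : j₀ ∈ eqvA τ σ
    · rw [if_pos hm, if_pos ((eqvA_mem τ σ j₀).mpr hm)]
    · rw [if_neg hm, if_neg (fun hc => hm ((eqvA_mem τ σ j₀).mp hc))]
  rw [hif]
  cases h1 : σ j₀ <;> cases h2 : τ j₀ <;> simp [signVal, h1, h2]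

lemma Splus (hα : 0 < αl ℓ) (hB₀ : 0 < B₀) (hd : 1 ≤ dl blk ℓ)
    (τ : BlkT blk ℓ → Bool) (j₀ : BlkT blk ℓ) :
    ∑ σ : BlkT blk ℓ → Bool,
      (if 0 < ipZ blk αl B₀ ℓ σ τ then signVal (Bval blk αl B₀ ℓ) (σ j₀) else 0)
    = Bval blk αl B₀ ℓ * (if τ j₀ then (1:ℝ) else -1) *
        ((dl blk ℓ - 1).choose ((dl blk ℓ - 1)/2) : ℝ) := by
  have htrans := Fintype.sum_equiv (eqvA τ)
    (fun σ : BlkT blk ℓ → Bool =>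
      if 0 < ipZ blk αl B₀ ℓ σ τ then signVal (Bval blk αl B₀ ℓ) (σ j₀) else 0)
    (fun s : Finset (BlkT blk ℓ) =>
      if dl blk ℓ < 2 * s.card then
        Bval blk αl B₀ ℓ * (if τ j₀ then (1:ℝ) else -1) *
          (if j₀ ∈ s then (1:ℝ) else -1) else 0)
    (fun σ => by
      beta_reduce
      rw [signVal_factor blk ℓ (Bval blk αl B₀ ℓ) τ σ j₀]
      exact if_congr (ipZ_pos_iff blk αl B₀ ℓ hα hB₀ σ τ) rfl rfl)
  rw [htrans, ← Finset.sum_filter, ← Finset.mul_sum]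
  have hdl : dl blk ℓ = Fintype.card (BlkT blk ℓ) := rfl
  rw [hdl] at hd ⊢
  rw [wsum_plus j₀ hd]

lemma Sminus (hα : 0 < αl ℓ) (hB₀ : 0 < B₀) (hd : 1 ≤ dl blk ℓ)
    (τ : BlkT blk ℓ → Bool) (j₀ : BlkT blk ℓ) :
    ∑ σ : BlkT blk ℓ → Bool,
      (if ipZ blk αl B₀ ℓ σ τ < 0 then signVal (Bval blk αl B₀ ℓ) (σ j₀) else 0)
    = -(Bval blk αl B₀ ℓ * (if τ j₀ then (1:ℝ) else -1) *
        ((dl blk ℓ - 1).choose ((dl blk ℓ - 1)/2) : ℝ)) := by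
  have htrans := Fintype.sum_equiv (eqvA τ)
    (fun σ : BlkT blk ℓ → Bool =>
      if ipZ blk αl B₀ ℓ σ τ < 0 then signVal (Bval blk αl B₀ ℓ) (σ j₀) else 0)
    (fun s : Finset (BlkT blk ℓ) =>
      if 2 * s.card < dl blk ℓ then
        Bval blk αl B₀ ℓ * (if τ j₀ then (1:ℝ) else -1) *
          (if j₀ ∈ s then (1:ℝ) else -1) else 0)
    (fun σ => by
      beta_reduce
      rw [signVal_factor blk ℓ (Bval blk αl B₀ ℓ) τ σ j₀]
      exact if_congr (ipZ_neg_iff blk αl B₀ ℓ hα hB₀ σ τ) rfl rfl)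
  rw [htrans, ← Finset.sum_filter, ← Finset.mul_sum]
  have hdl : dl blk ℓ = Fintype.card (BlkT blk ℓ) := rfl
  rw [hdl] at hd ⊢
  rw [wsum_minus j₀, wsum_plus j₀ hd]
  ring

lemma Szero (hα : 0 < αl ℓ) (hB₀ : 0 < B₀) (hd : 1 ≤ dl blk ℓ)
    (τ : BlkT blk ℓ → Bool) (j₀ : BlkT blk ℓ) :
    ∑ σ : BlkT blk ℓ → Bool,
      (if ipZ blk αl B₀ ℓ σ τ = 0 then signVal (Bval blk αl B₀ ℓ) (σ j₀) else 0)
    = 0 := by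
  have htrans := Fintype.sum_equiv (eqvA τ)
    (fun σ : BlkT blk ℓ → Bool =>
      if ipZ blk αl B₀ ℓ σ τ = 0 then signVal (Bval blk αl B₀ ℓ) (σ j₀) else 0)
    (fun s : Finset (BlkT blk ℓ) =>
      if 2 * s.card = dl blk ℓ then
        Bval blk αl B₀ ℓ * (if τ j₀ then (1:ℝ) else -1) *
          (if j₀ ∈ s then (1:ℝ) else -1) else 0)
    (fun σ => by
      beta_reduce
      rw [signVal_factor blk ℓ (Bval blk αl B₀ ℓ) τ σ j₀]
      exact if_congr (ipZ_zero_iff blk αl B₀ ℓ hα hB₀ σ τ) rfl rfl)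
  rw [htrans, ← Finset.sum_filter, ← Finset.mul_sum]
  have hdl : dl blk ℓ = Fintype.card (BlkT blk ℓ) := rfl
  rw [hdl] at hd ⊢
  rw [wsum_zero j₀ hd, mul_zero]

lemma pl_pos (hα : 0 < αl ℓ) (hB₀ : 0 < B₀) (hd : 1 ≤ dl blk ℓ) :
    0 < pl blk ℓ := by
  classical
  have h1 := Dplus_pl blk αl B₀ ℓ hα hB₀ hd (fun _ => true)
  have h2 := Dplus_pos blk αl B₀ ℓ hα hB₀ hd (fun _ => true)
  have h3 : (1:ℝ) ≤ (DplusCard blk αl B₀ ℓ (fun _ => true) : ℝ) := by exact_mod_cast h2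
  have h4 : (0:ℝ) < 2 ^ (dl blk ℓ - 1) := by positivity
  nlinarith

lemma condP_expect (hα : 0 < αl ℓ) (hB₀ : 0 < B₀) (hd : 1 ≤ dl blk ℓ)
    (τ : BlkT blk ℓ → Bool) (j₀ : BlkT blk ℓ) :
    ∑ σ : BlkT blk ℓ → Bool,
      condP blk αl B₀ ℓ τ σ * signVal (Bval blk αl B₀ ℓ) (σ j₀)
    = signVal B₀ (τ j₀) := by
  have hsplit : ∀ σ, condP blk αl B₀ ℓ τ σ * signVal (Bval blk αl B₀ ℓ) (σ j₀)
      = pl blk ℓ * pil αl ℓ * ((DplusCard blk αl B₀ ℓ τ : ℝ))⁻¹ *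
          (if 0 < ipZ blk αl B₀ ℓ σ τ then signVal (Bval blk αl B₀ ℓ) (σ j₀) else 0)
        + pl blk ℓ * (1 - pil αl ℓ) * ((DminusCard blk αl B₀ ℓ τ : ℝ))⁻¹ *
          (if ipZ blk αl B₀ ℓ σ τ < 0 then signVal (Bval blk αl B₀ ℓ) (σ j₀) else 0)
        + (1 - pl blk ℓ) * ((DzeroCard blk αl B₀ ℓ τ : ℝ))⁻¹ *
          (if ipZ blk αl B₀ ℓ σ τ = 0 then signVal (Bval blk αl B₀ ℓ) (σ j₀) else 0) := by
    intro σ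
    unfold condP
    split_ifs <;> ring
  rw [Finset.sum_congr rfl fun σ _ => hsplit σ]
  rw [Finset.sum_add_distrib, Finset.sum_add_distrib, ← Finset.mul_sum, ← Finset.mul_sum,
    ← Finset.mul_sum]
  rw [Splus blk αl B₀ ℓ hα hB₀ hd τ j₀, Sminus blk αl B₀ ℓ hα hB₀ hd τ j₀,
    Szero blk αl B₀ ℓ hα hB₀ hd τ j₀]
  rw [Dminus_eq_Dplus blk αl B₀ ℓ hα hB₀ τ, Dplus_pl blk αl B₀ ℓ hα hB₀ hd τ]
  have hplpos := pl_pos blk αl B₀ ℓ hα hB₀ hd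
  have hpl : pl blk ℓ ≠ 0 := ne_of_gt hplpos
  have hE1 : Real.exp (αl ℓ) - 1 ≠ 0 := by
    have := one_lt_exp' αl ℓ hα; intro h; nlinarith
  have hE2 : (1:ℝ) + Real.exp (αl ℓ) ≠ 0 := by positivity
  have hM : ((dl blk ℓ - 1).choose ((dl blk ℓ - 1)/2) : ℝ) ≠ 0 := by
    have := Mchoose_pos (dl blk ℓ)
    exact_mod_cast Nat.pos_iff_ne_zero.mp this
  have h2p : ((2:ℝ) ^ (dl blk ℓ - 1)) ≠ 0 := by positivity
  unfold pil Bval Bk Gam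
  cases τ j₀ <;> simp only [signVal, if_true, if_false, Bool.false_eq_true, ↓reduceIte] <;> field_simp <;> ring
end SumAux
section BlockAux2
open Finset
open scoped Classical

variable {𝒳 : Type*} [MeasurableSpace 𝒳]
variable {𝒥 𝓛 : Type*} [Fintype 𝒥] [DecidableEq 𝒥] [Fintype 𝓛] [DecidableEq 𝓛]
variable (blk : 𝒥 → 𝓛) (αl : 𝓛 → ℝ) (B₀ : ℝ) (ℓ : 𝓛)

lemma sum_indic {γ : Type*} [Fintype γ] (P : γ → Prop) [DecidablePred P] :
    ∑ x : γ, (if P x then (1:ℝ) else 0) = ((univ.filter P).card : ℝ) := by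
  rw [← Finset.sum_filter, Finset.sum_const, nsmul_eq_mul, mul_one]

lemma condP_sum (hα : 0 < αl ℓ) (hB₀ : 0 < B₀) (hd : 1 ≤ dl blk ℓ)
    (τ : BlkT blk ℓ → Bool) :
    ∑ σ : BlkT blk ℓ → Bool, condP blk αl B₀ ℓ τ σ = 1 := by
  have hsplit : ∀ σ, condP blk αl B₀ ℓ τ σ
      = pl blk ℓ * pil αl ℓ * ((DplusCard blk αl B₀ ℓ τ : ℝ))⁻¹ *
          (if 0 < ipZ blk αl B₀ ℓ σ τ then (1:ℝ) else 0)
        + pl blk ℓ * (1 - pil αl ℓ) * ((DminusCard blk αl B₀ ℓ τ : ℝ))⁻¹ *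
          (if ipZ blk αl B₀ ℓ σ τ < 0 then (1:ℝ) else 0)
        + (1 - pl blk ℓ) * ((DzeroCard blk αl B₀ ℓ τ : ℝ))⁻¹ *
          (if ipZ blk αl B₀ ℓ σ τ = 0 then (1:ℝ) else 0) := by
    intro σ
    unfold condP
    split_ifs <;> ring
  rw [Finset.sum_congr rfl fun σ _ => hsplit σ]
  rw [Finset.sum_add_distrib, Finset.sum_add_distrib, ← Finset.mul_sum, ← Finset.mul_sum,
    ← Finset.mul_sum]
  rw [sum_indic, sum_indic, sum_indic]
  have hDp : ((univ.filter fun σ : BlkT blk ℓ → Bool => 0 < ipZ blk αl B₀ ℓ σ τ).card : ℝ)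
      = (DplusCard blk αl B₀ ℓ τ : ℝ) := by rw [DplusCard]
  have hDm : ((univ.filter fun σ : BlkT blk ℓ → Bool => ipZ blk αl B₀ ℓ σ τ < 0).card : ℝ)
      = (DminusCard blk αl B₀ ℓ τ : ℝ) := by rw [DminusCard]
  have hDz : ((univ.filter fun σ : BlkT blk ℓ → Bool => ipZ blk αl B₀ ℓ σ τ = 0).card : ℝ)
      = (DzeroCard blk αl B₀ ℓ τ : ℝ) := by rw [DzeroCard]
  rw [hDp, hDm, hDz]
  have hp1 : ((DplusCard blk αl B₀ ℓ τ : ℝ))⁻¹ * (DplusCard blk αl B₀ ℓ τ : ℝ) = 1 := by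
    have := Dplus_pos blk αl B₀ ℓ hα hB₀ hd τ
    have hne : (DplusCard blk αl B₀ ℓ τ : ℝ) ≠ 0 := by
      have : (0:ℕ) < DplusCard blk αl B₀ ℓ τ := this
      exact_mod_cast Nat.pos_iff_ne_zero.mp this
    exact inv_mul_cancel₀ hne
  have hm1 : ((DminusCard blk αl B₀ ℓ τ : ℝ))⁻¹ * (DminusCard blk αl B₀ ℓ τ : ℝ) = 1 := by
    rw [Dminus_eq_Dplus blk αl B₀ ℓ hα hB₀ τ]
    exact hp1
  rcases Nat.mod_two_eq_zero_or_one (dl blk ℓ) with h | h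
  · have hz1 : ((DzeroCard blk αl B₀ ℓ τ : ℝ))⁻¹ * (DzeroCard blk αl B₀ ℓ τ : ℝ) = 1 := by
      have hval := Dzero_val blk αl B₀ ℓ hα hB₀ τ
      rw [if_pos h] at hval
      have hpos : 0 < DzeroCard blk αl B₀ ℓ τ := by
        rw [hval]; exact Nat.choose_pos (Nat.div_le_self _ _)
      have hne : (DzeroCard blk αl B₀ ℓ τ : ℝ) ≠ 0 := by
        exact_mod_cast Nat.pos_iff_ne_zero.mp hpos
      exact inv_mul_cancel₀ hne
    rw [mul_assoc (pl blk ℓ * pil αl ℓ), mul_assoc (pl blk ℓ * (1 - pil αl ℓ)),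
      mul_assoc (1 - pl blk ℓ), hp1, hm1, hz1]
    ring
  · have hpl1 : pl blk ℓ = 1 := by unfold pl; rw [if_pos h]
    rw [mul_assoc (pl blk ℓ * pil αl ℓ), mul_assoc (pl blk ℓ * (1 - pil αl ℓ)),
      mul_assoc (1 - pl blk ℓ), hp1, hm1, hpl1]
    ring

variable (φ : 𝒥 → 𝒳 → ℝ)

lemma vP_sum (x : 𝒳) : ∑ τ : BlkT blk ℓ → Bool, vP blk B₀ φ x ℓ τ = 1 := by
  unfold vP
  refine Eq.trans (Fintype.prod_sum fun (j : BlkT blk ℓ) (b : Bool) =>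
    if b then 1/2 + φ j.1 x / (2 * B₀) else 1/2 - φ j.1 x / (2 * B₀)).symm ?_
  apply Finset.prod_eq_one
  intro j _
  rw [Fintype.sum_bool]
  norm_num

lemma vP_exp (hB₀ : 0 < B₀) (x : 𝒳) (j₀ : BlkT blk ℓ) :
    ∑ τ : BlkT blk ℓ → Bool, vP blk B₀ φ x ℓ τ * signVal B₀ (τ j₀) = φ j₀.1 x := by
  have hB₀' : B₀ ≠ 0 := ne_of_gt hB₀
  have hstep : ∀ τ : BlkT blk ℓ → Bool, vP blk B₀ φ x ℓ τ * signVal B₀ (τ j₀)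
      = ∏ j : BlkT blk ℓ,
          ((if τ j then 1/2 + φ j.1 x / (2 * B₀) else 1/2 - φ j.1 x / (2 * B₀)) *
            (if j = j₀ then signVal B₀ (τ j) else 1)) := by
    intro τ
    rw [Finset.prod_mul_distrib]
    unfold vP
    congr 1
    rw [Finset.prod_eq_single j₀ (fun j _ hj => if_neg hj)
      (fun h => absurd (mem_univ j₀) h), if_pos rfl]
  rw [Finset.sum_congr rfl fun τ _ => hstep τ]
  refine Eq.trans (Fintype.prod_sum fun (j : BlkT blk ℓ) (b : Bool) =>
    ((if b then 1/2 + φ j.1 x / (2 * B₀) else 1/2 - φ j.1 x / (2 * B₀)) *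
      (if j = j₀ then signVal B₀ b else 1))).symm ?_
  rw [Finset.prod_eq_single j₀ ?h1 (fun h => absurd (mem_univ j₀) h)]
  · rw [Fintype.sum_bool, if_pos rfl, if_pos rfl]
    simp only [signVal, if_true, if_false]
    norm_num
    field_simp
    ring
  · intro j _ hj
    rw [Fintype.sum_bool, if_neg hj, if_neg hj]
    norm_num

lemma blockP_sum (hα : 0 < αl ℓ) (hB₀ : 0 < B₀) (hd : 1 ≤ dl blk ℓ) (x : 𝒳) :
    ∑ σ : BlkT blk ℓ → Bool, blockP blk αl B₀ φ x ℓ σ = 1 := by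
  unfold blockP
  rw [Finset.sum_comm]
  rw [Finset.sum_congr rfl fun τ _ => by
    rw [← Finset.mul_sum, condP_sum blk αl B₀ ℓ hα hB₀ hd τ, mul_one]]
  exact vP_sum blk B₀ ℓ φ x

lemma blockP_exp (hα : 0 < αl ℓ) (hB₀ : 0 < B₀) (hd : 1 ≤ dl blk ℓ) (x : 𝒳)
    (j₀ : BlkT blk ℓ) :
    ∑ σ : BlkT blk ℓ → Bool,
      blockP blk αl B₀ φ x ℓ σ * signVal (Bval blk αl B₀ ℓ) (σ j₀) = φ j₀.1 x := by
  unfold blockP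
  rw [Finset.sum_congr rfl fun σ _ => Finset.sum_mul _ _ _]
  rw [Finset.sum_comm]
  rw [Finset.sum_congr rfl fun τ _ => by
    rw [Finset.sum_congr rfl fun σ _ => mul_assoc _ _ _, ← Finset.mul_sum,
      condP_expect blk αl B₀ ℓ hα hB₀ hd τ j₀]]
  exact vP_exp blk B₀ ℓ φ hB₀ x j₀

end BlockAux2
section FinalAux
open Finset MeasureTheory
open scoped Classical ENNReal

variable {𝒳 : Type*} [MeasurableSpace 𝒳]
variable {𝒥 𝓛 : Type*} [Fintype 𝒥] [DecidableEq 𝒥] [Fintype 𝓛] [DecidableEq 𝓛]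

/-- regroup a sign vector by blocks -/
def blockEquiv (blk : 𝒥 → 𝓛) : (𝒥 → Bool) ≃ ∀ ℓ, (BlkT blk ℓ → Bool) where
  toFun σ := fun ℓ j => σ j.1
  invFun g := fun j => g (blk j) ⟨j, rfl⟩
  left_inv σ := rfl
  right_inv g := by
    funext ℓ j'
    obtain ⟨j'', hj⟩ := j'
    subst hj
    rfl

noncomputable def auxF (blk : 𝒥 → 𝓛) (αl : 𝓛 → ℝ) (B₀ : ℝ) (φ : 𝒥 → 𝒳 → ℝ) (x : 𝒳)
    (j : 𝒥) : ∀ ℓ, (BlkT blk ℓ → Bool) → ℝ :=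
  fun ℓ t => blockP blk αl B₀ φ x ℓ t *
    (if h : blk j = ℓ then signVal (Bval blk αl B₀ (blk j)) (t ⟨j, h⟩) else 1)

variable (blk : 𝒥 → 𝓛) (αl : 𝓛 → ℝ) (B₀ : ℝ) (φ : 𝒥 → 𝒳 → ℝ)

lemma pil_nonneg (ℓ : 𝓛) : 0 ≤ pil αl ℓ := by
  unfold pil
  positivity

lemma pil_le_one (ℓ : 𝓛) : pil αl ℓ ≤ 1 := by
  unfold pil
  rw [div_le_one (by positivity)]
  linarith [Real.exp_pos (αl ℓ)]

lemma pl_le_one (ℓ : 𝓛) : pl blk ℓ ≤ 1 := by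
  unfold pl
  split_ifs
  · exact le_rfl
  · have : (0:ℝ) ≤ ((dl blk ℓ).choose (dl blk ℓ / 2) : ℝ) / 2 ^ dl blk ℓ := by positivity
    linarith

lemma condP_nonneg (ℓ : 𝓛) (hα : 0 < αl ℓ) (hB₀ : 0 < B₀) (hd : 1 ≤ dl blk ℓ)
    (τ σ : BlkT blk ℓ → Bool) : 0 ≤ condP blk αl B₀ ℓ τ σ := by
  have hpl0 : (0:ℝ) ≤ pl blk ℓ := le_of_lt (pl_pos blk αl B₀ ℓ hα hB₀ hd)
  have hpl1 := pl_le_one blk ℓ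
  have hpi0 := pil_nonneg αl ℓ
  have hpi1 := pil_le_one αl ℓ
  have h1 : (0:ℝ) ≤ (if 0 < ipZ blk αl B₀ ℓ σ τ
      then ((DplusCard blk αl B₀ ℓ τ : ℝ))⁻¹ else 0) := by
    split_ifs
    · positivity
    · exact le_rfl
  have h2 : (0:ℝ) ≤ (if ipZ blk αl B₀ ℓ σ τ < 0
      then ((DminusCard blk αl B₀ ℓ τ : ℝ))⁻¹ else 0) := by
    split_ifs
    · positivity
    · exact le_rfl
  have h3 : (0:ℝ) ≤ (if ipZ blk αl B₀ ℓ σ τ = 0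
      then ((DzeroCard blk αl B₀ ℓ τ : ℝ))⁻¹ else 0) := by
    split_ifs
    · positivity
    · exact le_rfl
  unfold condP
  have ha : (0:ℝ) ≤ 1 - pil αl ℓ := by linarith
  have hb : (0:ℝ) ≤ 1 - pl blk ℓ := by linarith
  have hx := mul_nonneg hpl0 (add_nonneg (mul_nonneg hpi0 h1) (mul_nonneg ha h2))
  have hy := mul_nonneg hb h3
  linarith

lemma vP_nonneg (ℓ : 𝓛) (hB₀ : 0 < B₀) (hφ : ∀ j x, |φ j x| ≤ B₀) (x : 𝒳)
    (τ : BlkT blk ℓ → Bool) : 0 ≤ vP blk B₀ φ x ℓ τ := by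
  unfold vP
  apply Finset.prod_nonneg
  intro i _
  obtain ⟨hl, hr⟩ := abs_le.1 (hφ i.1 x)
  split_ifs
  · have he : 1/2 + φ i.1 x / (2 * B₀) = (B₀ + φ i.1 x) / (2 * B₀) := by
      field_simp
    rw [he]
    exact div_nonneg (by linarith) (by linarith)
  · have he : 1/2 - φ i.1 x / (2 * B₀) = (B₀ - φ i.1 x) / (2 * B₀) := by
      field_simp
    rw [he]
    exact div_nonneg (by linarith) (by linarith)

lemma blockP_nonneg (ℓ : 𝓛) (hα : 0 < αl ℓ) (hB₀ : 0 < B₀) (hφ : ∀ j x, |φ j x| ≤ B₀)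
    (hd : 1 ≤ dl blk ℓ) (x : 𝒳) (σ : BlkT blk ℓ → Bool) :
    0 ≤ blockP blk αl B₀ φ x ℓ σ := by
  unfold blockP
  apply Finset.sum_nonneg
  intro τ _
  exact mul_nonneg (vP_nonneg blk B₀ φ ℓ hB₀ hφ x τ)
    (condP_nonneg blk αl B₀ ℓ hα hB₀ hd τ σ)

lemma mechP_nonneg (hα : ∀ ℓ, 0 < αl ℓ) (hB₀ : 0 < B₀) (hφ : ∀ j x, |φ j x| ≤ B₀)
    (hd : ∀ ℓ, 1 ≤ dl blk ℓ) (x : 𝒳) (σ : 𝒥 → Bool) :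
    0 ≤ mechP blk αl B₀ φ x σ := by
  unfold mechP
  apply Finset.prod_nonneg
  intro ℓ _
  exact blockP_nonneg blk αl B₀ φ ℓ (hα ℓ) hB₀ hφ (hd ℓ) x _

lemma mech_key (hα : ∀ ℓ, 0 < αl ℓ) (hB₀ : 0 < B₀)
    (hd : ∀ ℓ, 1 ≤ dl blk ℓ) (x : 𝒳) (j : 𝒥) :
    ∑ σ : 𝒥 → Bool, mechP blk αl B₀ φ x σ * zOf blk αl B₀ σ j = φ j x := by
  have hstep : ∀ σ : 𝒥 → Bool, mechP blk αl B₀ φ x σ * zOf blk αl B₀ σ j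
      = ∏ ℓ, auxF blk αl B₀ φ x j ℓ ((blockEquiv blk) σ ℓ) := by
    intro σ
    have h1 : zOf blk αl B₀ σ j = ∏ ℓ, (if h : blk j = ℓ then
        signVal (Bval blk αl B₀ (blk j)) (((blockEquiv blk) σ) ℓ ⟨j, h⟩) else 1) := by
      rw [Finset.prod_eq_single (blk j) (fun ℓ _ hℓ => dif_neg (fun hc => hℓ hc.symm))
        (fun h => absurd (Finset.mem_univ _) h), dif_pos rfl]
      rfl
    have h2 : mechP blk αl B₀ φ x σ
        = ∏ ℓ, blockP blk αl B₀ φ x ℓ (((blockEquiv blk) σ) ℓ) := rfl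
    rw [h2, h1, ← Finset.prod_mul_distrib]
    rfl
  calc ∑ σ : 𝒥 → Bool, mechP blk αl B₀ φ x σ * zOf blk αl B₀ σ j
      = ∑ σ : 𝒥 → Bool, ∏ ℓ, auxF blk αl B₀ φ x j ℓ ((blockEquiv blk) σ ℓ) :=
        Finset.sum_congr rfl fun σ _ => hstep σ
    _ = ∑ g : ∀ ℓ, BlkT blk ℓ → Bool, ∏ ℓ, auxF blk αl B₀ φ x j ℓ (g ℓ) :=
        Fintype.sum_equiv (blockEquiv blk) _ _ (fun σ => rfl)
    _ = ∏ ℓ, ∑ t : BlkT blk ℓ → Bool, auxF blk αl B₀ φ x j ℓ t :=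
        (Fintype.prod_sum _).symm
    _ = φ j x := by
        rw [Finset.prod_eq_single (blk j) ?hother (fun h => absurd (Finset.mem_univ _) h)]
        · unfold auxF
          have heq : ∀ t : BlkT blk (blk j) → Bool,
              blockP blk αl B₀ φ x (blk j) t *
                (if h : blk j = blk j then
                  signVal (Bval blk αl B₀ (blk j)) (t ⟨j, h⟩) else 1)
              = blockP blk αl B₀ φ x (blk j) t *
                  signVal (Bval blk αl B₀ (blk j)) (t ⟨j, rfl⟩) := by
            intro t
            rw [dif_pos rfl]
          rw [Finset.sum_congr rfl fun t _ => heq t]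
          exact blockP_exp blk αl B₀ (blk j) φ (hα (blk j)) hB₀ (hd (blk j)) x ⟨j, rfl⟩
        · intro ℓ _ hℓ
          unfold auxF
          have heq : ∀ t : BlkT blk ℓ → Bool,
              blockP blk αl B₀ φ x ℓ t *
                (if h : blk j = ℓ then
                  signVal (Bval blk αl B₀ (blk j)) (t ⟨j, h⟩) else 1)
              = blockP blk αl B₀ φ x ℓ t := by
            intro t
            rw [dif_neg (fun hc => hℓ hc.symm), mul_one]
          rw [Finset.sum_congr rfl fun t _ => heq t]
          exact blockP_sum blk αl B₀ ℓ φ (hα ℓ) hB₀ (hd ℓ) x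

end FinalAux
/-- Proposition 2.1 of the paper. For the Coordinate block
privacy mechanism, the private view is conditionally unbiased: for every
individual value `x` and every index `j ∈ 𝒥`,
`E[Z_j | X = x] = φ_j(x)`; hence `E[Z_j | X] = φ_j(X)` almost surely. -/
theorem coordinate_block_mechanism_unbiased
    {𝒳 : Type*} [MeasurableSpace 𝒳]
    {𝒥 𝓛 : Type*} [Fintype 𝒥] [DecidableEq 𝒥] [Fintype 𝓛] [DecidableEq 𝓛]
    (blk : 𝒥 → 𝓛) (hblk : Function.Surjective blk)
    (αl : 𝓛 → ℝ) (hαl : ∀ ℓ, 0 < αl ℓ)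
    (B₀ : ℝ) (hB₀ : 0 < B₀)
    (φ : 𝒥 → 𝒳 → ℝ) (hφ : ∀ j x, |φ j x| ≤ B₀) :
    ∀ (x : 𝒳) (j : 𝒥), ∫ z, z j ∂(mechQ blk αl B₀ φ x) = φ j x := by
  intro x j
  have hd : ∀ ℓ, 1 ≤ dl blk ℓ := by
    intro ℓ
    obtain ⟨j', hj'⟩ := hblk ℓ
    exact Fintype.card_pos_iff.2 ⟨⟨j', hj'⟩⟩
  have hmech : ∀ σ : 𝒥 → Bool, 0 ≤ mechP blk αl B₀ φ x σ :=
    mechP_nonneg blk αl B₀ φ hαl hB₀ hφ hd x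
  have hint : ∀ σ ∈ (Finset.univ : Finset (𝒥 → Bool)),
      MeasureTheory.Integrable (fun z : 𝒥 → ℝ => z j)
        (ENNReal.ofReal (mechP blk αl B₀ φ x σ) •
          MeasureTheory.Measure.dirac (zOf blk αl B₀ σ)) := by
    intro σ _
    apply MeasureTheory.Integrable.smul_measure _ ENNReal.ofReal_ne_top
    apply (MeasureTheory.integrable_const ((zOf blk αl B₀ σ) j)).congr
    rw [Filter.eventuallyEq_comm, Filter.EventuallyEq, MeasureTheory.ae_dirac_eq]
    simp
  rw [mechQ, MeasureTheory.integral_finset_sum_measure hint]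
  rw [Finset.sum_congr rfl fun σ _ => by
    rw [MeasureTheory.integral_smul_measure, MeasureTheory.integral_dirac, smul_eq_mul,
      ENNReal.toReal_ofReal (hmech σ)]]
  exact mech_key blk αl B₀ φ hαl hB₀ hd x j
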